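/- Under Conditions G, R₀ and R∞, for each k the function b_{k1}(ρ)Δ(ρ) has at most a finite set of zeros in the closed upper half-plane, all simple; at each such zero, ψ_{kk}(x,·) has either a simple pole or a removable singularity; and for every pole ρ₀ ∈ Z_k^+ there is a constant α_k(ρ₀), independent of x, such that res_{ρ=ρ₀} ψ_{kk}(x,ρ) = α_k(ρ₀) f_k(x,ρ₀) = α_k(ρ₀) e^{iρ₀x}(1 + o(1)) as x → ∞. -/

import Mathlib

open Filter Complex Topology MeasureTheory Asymptotics Matrix

noncomputable section

/-- `y` solves the equation `-y'' + (ν₀/x² + q x) y = λ y` on `(0,∞)`. -/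
def SolvesEq (ν₀ : ℂ) (q : ℝ → ℂ) (lam : ℂ) (y : ℝ → ℂ) : Prop :=
  ∀ x : ℝ, 0 < x → - deriv (deriv y) x + (ν₀ / (x : ℂ) ^ 2 + q x) * y x = lam * y x

/-- The Jost normalization: `y^{(ξ)}(x) = e^{iρx}((iρ)^ξ + o(1))` as `x → ∞`, `ξ = 0,1`. -/
def JostAt (ρ : ℂ) (y : ℝ → ℂ) : Prop :=
  Tendsto (fun x : ℝ => y x * Complex.exp (-(Complex.I * ρ * x))) atTop (𝓝 1) ∧
  Tendsto (fun x : ℝ => deriv y x * Complex.exp (-(Complex.I * ρ * x))) atTop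
    (𝓝 (Complex.I * ρ))

/-- The Wronskian `⟨y,z⟩ = y z' - y' z` at the point `x`. -/
def Wr (y z : ℝ → ℂ) (x : ℝ) : ℂ := y x * deriv z x - deriv y x * z x

/-- Condition (2.2): `∫₀¹ |x^{1−2ν} q(x)| dx + ∫₁^∞ |x q(x)| dx < ∞`. -/
def Cond22 (ν : ℂ) (q : ℝ → ℂ) : Prop :=
  MeasureTheory.IntegrableOn (fun x : ℝ => x ^ (1 - 2 * ν.re) * ‖q x‖) (Set.Ioc 0 1) ∧
  MeasureTheory.IntegrableOn (fun x : ℝ => x * ‖q x‖) (Set.Ioi 1)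

/-- The filter `ρ → ∞` within the closed upper half-plane. -/
def atInfUHP : Filter ℂ := Bornology.cobounded ℂ ⊓ Filter.principal {ρ : ℂ | 0 ≤ ρ.im}

/-- The filter `ρ → 0` within the closed upper half-plane (excluding `0`). -/
def nhdsZeroUHP : Filter ℂ := nhdsWithin 0 {ρ : ℂ | 0 ≤ ρ.im ∧ ρ ≠ 0}

/-- The star-graph problem `L` of the paper: `p` rays, on ray `R_j` the equation
`−y'' + (ν_{j0}/x² + q_j(x))y = ρ²y` with `ν_{j0} = ν_j² − 1/4`, `Re ν_j > 1/2`,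
`ν_j ∉ ℕ`, Condition ν, potentials satisfying (2.2), matching coefficients
`σ_j ≠ 0`, `σ_{j2} ≠ 0`, the solutions `S_{j1}, S_{j2}` (with unit Wronskian), the Jost
solutions `f_j`, and the Stokes multipliers `b_{j1}, b_{j2}` together with their
Lemma 2.1 asymptotic constants `b^∞_{j1}, b^∞_{j2} ≠ 0` and `b⁰_{j1}, b⁰_{j2}`. -/
structure GraphProblem (p : ℕ) where
  ν : Fin p → ℂ
  σ : Fin p → ℂ
  σ1 : Fin p → ℂ
  σ2 : Fin p → ℂ
  q : Fin p → ℝ → ℂ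
  S1 : Fin p → ℝ → ℂ → ℂ
  S2 : Fin p → ℝ → ℂ → ℂ
  f : Fin p → ℝ → ℂ → ℂ
  b1 : Fin p → ℂ → ℂ
  b2 : Fin p → ℂ → ℂ
  b1inf : Fin p → ℂ
  b2inf : Fin p → ℂ
  b10 : Fin p → ℂ
  b20 : Fin p → ℂ
  hν : ∀ j, 1 / 2 < (ν j).re
  hνnat : ∀ j (n : ℕ), ν j ≠ (n : ℂ)
  hνcond : ∀ j l, ν j ≠ ν l → (ν j).re ≠ (ν l).re
  hσ : ∀ j, σ j ≠ 0
  hσ2 : ∀ j, σ2 j ≠ 0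
  hq : ∀ j, Cond22 (ν j) (q j)
  hS1 : ∀ j lam, SolvesEq ((ν j) ^ 2 - 1 / 4) (q j) lam (fun x => S1 j x lam)
  hS2 : ∀ j lam, SolvesEq ((ν j) ^ 2 - 1 / 4) (q j) lam (fun x => S2 j x lam)
  hWrS : ∀ j lam (x : ℝ), 0 < x →
    Wr (fun t => S1 j t lam) (fun t => S2 j t lam) x = 1
  hf : ∀ j (ρ : ℂ), ρ ≠ 0 → 0 ≤ ρ.im →
    SolvesEq ((ν j) ^ 2 - 1 / 4) (q j) (ρ ^ 2) (fun x => f j x ρ) ∧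
      JostAt ρ (fun x => f j x ρ)
  hfan : ∀ j (x : ℝ), 0 < x → DifferentiableOn ℂ (fun ρ => f j x ρ) {ρ : ℂ | 0 < ρ.im}
  hb : ∀ j (ρ : ℂ), ρ ≠ 0 → 0 ≤ ρ.im → ∀ x : ℝ, 0 < x →
    f j x ρ = b1 j ρ * S1 j x (ρ ^ 2) + b2 j ρ * S2 j x (ρ ^ 2)
  hb1inf : ∀ j, (fun ρ : ℂ => b1 j ρ - ρ ^ ((1 : ℂ) / 2 - ν j) * b1inf j)
      =O[atInfUHP] fun ρ : ℂ => ρ ^ ((1 : ℂ) / 2 - ν j) / ρ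
  hb2inf : ∀ j, (fun ρ : ℂ => b2 j ρ - ρ ^ ((1 : ℂ) / 2 + ν j) * b2inf j)
      =O[atInfUHP] fun ρ : ℂ => ρ ^ ((1 : ℂ) / 2 + ν j) / ρ
  hb1inf0 : ∀ j, b1inf j ≠ 0
  hb2inf0 : ∀ j, b2inf j ≠ 0
  hb10 : ∀ j, Tendsto (fun ρ : ℂ => b1 j ρ / ρ ^ ((1 : ℂ) / 2 - ν j)) nhdsZeroUHP
    (𝓝 (b10 j))
  hb20 : ∀ j, Tendsto (fun ρ : ℂ => b2 j ρ / ρ ^ ((1 : ℂ) / 2 - ν j)) nhdsZeroUHP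
    (𝓝 (b20 j))

namespace GraphProblem

variable {p : ℕ}

/-- The characteristic function (3.5):
`Δ(ρ) = Σ_s (σ_{s1} b_{s1}(ρ) + σ_{s2} b_{s2}(ρ)) ∏_{j≠s} σ_j b_{j1}(ρ)`. -/
def Delta (G : GraphProblem p) (ρ : ℂ) : ℂ :=
  ∑ s : Fin p, (G.σ1 s * G.b1 s ρ + G.σ2 s * G.b2 s ρ) *
    ∏ j ∈ Finset.univ.erase s, (G.σ j * G.b1 j ρ)

/-- `Δ_k(ρ) = σ_k² ∏_{j≠k} σ_j b_{j1}(ρ)` (formula (3.6)). -/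
def Deltak (G : GraphProblem p) (k : Fin p) (ρ : ℂ) : ℂ :=
  (G.σ k) ^ 2 * ∏ j ∈ Finset.univ.erase k, (G.σ j * G.b1 j ρ)

/-- `d⁰ = Σ_s (σ_{s1} b⁰_{s1} + σ_{s2} b⁰_{s2}) ∏_{j≠s} σ_j b⁰_{j1}` (Lemma 3.1). -/
def d0 (G : GraphProblem p) : ℂ :=
  ∑ s : Fin p, (G.σ1 s * G.b10 s + G.σ2 s * G.b20 s) *
    ∏ j ∈ Finset.univ.erase s, (G.σ j * G.b10 j)

open scoped Classical in
/-- `a^∞₁ = Σ_{s ∈ I₁} σ_{s2} b^∞_{s2} ∏_{j≠s} σ_j b^∞_{j1}`, where `I₁` is the group of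
rays whose `ν_j` has the largest real part. -/
def aInf1 (G : GraphProblem p) : ℂ :=
  ∑ s : Fin p, if (∀ l, (G.ν l).re ≤ (G.ν s).re) then
    G.σ2 s * G.b2inf s * ∏ j ∈ Finset.univ.erase s, (G.σ j * G.b1inf j) else 0

/-- Condition G: each `b_{k1}(ρ)Δ(ρ)` has no real zeros (except possibly `ρ = 0`) and no
multiple zeros. -/
def CondG (G : GraphProblem p) : Prop :=
  ∀ k : Fin p, (∀ ρ : ℝ, ρ ≠ 0 → G.b1 k ρ * G.Delta ρ ≠ 0) ∧
    ∀ ρ : ℂ, 0 < ρ.im → G.b1 k ρ * G.Delta ρ = 0 →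
      deriv (fun z => G.b1 k z * G.Delta z) ρ ≠ 0

/-- Condition R₀: `b⁰_{j1} ≠ 0` for all `j`, and `d⁰ ≠ 0`. -/
def CondR0 (G : GraphProblem p) : Prop := (∀ j, G.b10 j ≠ 0) ∧ G.d0 ≠ 0

/-- Condition R∞: `a^∞₁ ≠ 0`. -/
def CondRinf (G : GraphProblem p) : Prop := G.aInf1 ≠ 0

end GraphProblem

/-- The Weyl-type solutions `ψ_k = {ψ_{kj}}` of the graph problem, in the form (3.3):
`ψ_{kj} = γ_{kj} f_j` for `j ≠ k`, `ψ_{kk} = γ_{kk} f_k + (2iρ/b_{k1}) S_{k2}`, where the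
coefficients `γ_{kj}, β_k` solve the linear system (3.4) and `γ_{kk}` is given by the
Cramer formula (3.6). -/
structure WeylData {p : ℕ} (G : GraphProblem p) where
  ψ : Fin p → Fin p → ℝ → ℂ → ℂ
  γ : Fin p → Fin p → ℂ → ℂ
  β : Fin p → ℂ → ℂ
  hψj : ∀ k j, j ≠ k → ∀ (x : ℝ) (ρ : ℂ), ψ k j x ρ = γ k j ρ * G.f j x ρ
  hψk : ∀ k (x : ℝ) (ρ : ℂ),
    ψ k k x ρ = γ k k ρ * G.f k x ρ + (2 * Complex.I * ρ / G.b1 k ρ) * G.S2 k x (ρ ^ 2)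
  hsys1 : ∀ k j (ρ : ℂ), ρ ≠ 0 → 0 ≤ ρ.im → G.b1 k ρ * G.Delta ρ ≠ 0 →
    G.σ j * G.b1 j ρ * γ k j ρ + β k ρ = 0
  hsys2 : ∀ k (ρ : ℂ), ρ ≠ 0 → 0 ≤ ρ.im → G.b1 k ρ * G.Delta ρ ≠ 0 →
    ∑ j, (G.σ1 j * G.b1 j ρ + G.σ2 j * G.b2 j ρ) * γ k j ρ
      = - G.σ2 k * (2 * Complex.I * ρ / G.b1 k ρ)
  hγkk : ∀ k (ρ : ℂ),
    γ k k ρ = (2 * Complex.I * ρ / G.b1 k ρ) * (G.Deltak k ρ / G.Delta ρ)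

/-- `h` has no analytic extension to a full neighbourhood of `ρ₀` (i.e. `ρ₀` is a
non-removable singularity). -/
def NotExtendable (h : ℂ → ℂ) (ρ₀ : ℂ) : Prop :=
  ¬ ∃ g : ℂ → ℂ, AnalyticAt ℂ g ρ₀ ∧ ∀ᶠ ρ in 𝓝[≠] ρ₀, g ρ = h ρ

/-- `Z_k^+`: the set of poles of `ψ_{kk}(x,·)` in the open upper half-plane. -/
def ZplusSet {p : ℕ} {G : GraphProblem p} (W : WeylData G) (k : Fin p) : Set ℂ :=
  {ρ₀ : ℂ | 0 < ρ₀.im ∧ ∃ x : ℝ, 0 < x ∧ NotExtendable (fun ρ => W.ψ k k x ρ) ρ₀}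

/-- The matrix `Ψ(x,ρ)` of (4.1): columns `(ψ_{kk}, ψ'_{kk})ᵀ` and `(f_k, f'_k)ᵀ` for
`Im ρ > 0`, and `Ψ(x,ρ) := Ψ(x,−ρ)` for `Im ρ < 0`. -/
def PsiM {p : ℕ} {G : GraphProblem p} (W : WeylData G) (k : Fin p) (x : ℝ) (ρ : ℂ) :
    Matrix (Fin 2) (Fin 2) ℂ :=
  let ρ' := if 0 ≤ ρ.im then ρ else -ρ
  !![W.ψ k k x ρ', G.f k x ρ';
     deriv (fun t => W.ψ k k t ρ') x, deriv (fun t => G.f k t ρ') x]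

/-! The zeros of `F = b_{k1}Δ` stay away from `0` and `∞` by the asymptotics of Lemma 2.1 together
with Conditions R₀ and R∞, are isolated in the open upper half-plane because they are simple, and
cannot accumulate at real points by Condition G; hence they are finitely many. Off its zeros,
`ψ_{kk} = N/F` with `N = 2iρ(Δ_k f_k + Δ S_{k2})` holomorphic, so a simple zero of `F` gives at most
a simple pole with residue `N(ρ₀)/F'(ρ₀)`. At a zero either `Δ(ρ₀) = 0`, or `b_{k1}(ρ₀) = 0` and
then `f_k = b_{k2} S_{k2}` with `b_{k2}(ρ₀) ≠ 0`; in both cases `N(x,ρ₀)` is `f_k(x,ρ₀)` times a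
factor independent of `x`. -/

open Bornology

theorem Set.Finite.of_isBounded_of_eventually_notMem {X : Type*} [PseudoMetricSpace X]
    [ProperSpace X] {Z : Set X} (hZ : IsBounded Z) (h : ∀ x, ∀ᶠ y in 𝓝[≠] x, y ∉ Z) :
    Z.Finite := by
  obtain ⟨hclosed, hdiscrete⟩ :=
    isClosed_and_discrete_iff.2 fun x => disjoint_principal_right.2 (h x)
  simpa using Metric.finite_isBounded_inter_isClosed hdiscrete hZ hclosed

theorem eventually_ne_zero_of_tendsto_div {α 𝕜 : Type*} [NormedField 𝕜] {l : Filter α}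
    {f g : α → 𝕜} {a : 𝕜} (h : Tendsto (fun x => f x / g x) l (𝓝 a)) (ha : a ≠ 0) :
    ∀ᶠ x in l, f x ≠ 0 :=
  (h.eventually_ne ha).mono fun x hx hf => hx (by rw [hf, zero_div])

theorem tendsto_div_of_isBigO_sub {l : Filter ℂ} (hl : l ≤ cobounded ℂ) {b g : ℂ → ℂ} {c : ℂ}
    (hg : ∀ᶠ ρ in l, g ρ ≠ 0) (h : (fun ρ => b ρ - g ρ * c) =O[l] fun ρ => g ρ / ρ) :
    Tendsto (fun ρ => b ρ / g ρ) l (𝓝 c) := by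
  have hO : (fun ρ => (b ρ - g ρ * c) / g ρ) =O[l] fun ρ => ρ⁻¹ :=
    (h.mul (isBigO_refl (fun ρ => (g ρ)⁻¹) l)).congr' (.of_eq rfl)
      (hg.mono fun ρ hρ => by field_simp)
  have hlim := (hO.trans_tendsto (tendsto_inv₀_cobounded.mono_left hl)).add_const c
  rw [zero_add] at hlim
  refine hlim.congr' ?_
  filter_upwards [hg] with ρ hρ
  field_simp
  ring

theorem tendsto_cpow_cobounded {w : ℂ} (hw : w.re < 0) :
    Tendsto (fun ρ : ℂ => ρ ^ w) (cobounded ℂ) (𝓝 0) :=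
  (Complex.isBigO_cpow_rpow isBoundedUnder_const).trans_tendsto <| by
    simpa [Function.comp_def] using
      (tendsto_rpow_neg_atTop (neg_pos.2 hw)).comp tendsto_norm_cobounded_atTop

theorem exists_analyticAt_eq_div_sub {𝕜 : Type*} [NontriviallyNormedField 𝕜] {N F h : 𝕜 → 𝕜}
    {z₀ : 𝕜} (hN : AnalyticAt 𝕜 N z₀) (hF : AnalyticAt 𝕜 F z₀) (hF₀ : F z₀ = 0)
    (hF' : deriv F z₀ ≠ 0) (hh : ∀ᶠ z in 𝓝[≠] z₀, h z = N z / F z) :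
    ∃ g : 𝕜 → 𝕜, AnalyticAt 𝕜 g z₀ ∧ g z₀ = N z₀ / deriv F z₀ ∧
      ∀ᶠ z in 𝓝[≠] z₀, h z = g z / (z - z₀) := by
  obtain ⟨q, hq⟩ := hF
  refine ⟨fun z => N z / dslope F z₀ z,
    hN.fun_div hq.has_fpower_series_dslope_fslope.analyticAt (by rwa [dslope_same]),
    by simp only [dslope_same], ?_⟩
  filter_upwards [hh] with z hz
  have hFz : F z = (z - z₀) * dslope F z₀ z := by
    simpa [hF₀] using (sub_smul_dslope F z₀ z).symm
  rw [hz, hFz, div_div, mul_comm]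

theorem tendsto_sub_mul_of_eq_div_sub {𝕜 : Type*} [NontriviallyNormedField 𝕜] {g h : 𝕜 → 𝕜}
    {z₀ : 𝕜} (hg : ContinuousAt g z₀) (hh : ∀ᶠ z in 𝓝[≠] z₀, h z = g z / (z - z₀)) :
    Tendsto (fun z => (z - z₀) * h z) (𝓝[≠] z₀) (𝓝 (g z₀)) := by
  refine hg.continuousWithinAt.tendsto.congr' ?_
  filter_upwards [hh, self_mem_nhdsWithin] with z hz hne
  rw [hz, mul_div_cancel₀ _ (sub_ne_zero.2 hne)]

theorem eventually_ne_zero_atInfUHP : ∀ᶠ ρ : ℂ in atInfUHP, ρ ≠ 0 :=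
  (eventually_ne_cobounded 0).filter_mono inf_le_left

theorem tendsto_cpow_atInfUHP {w : ℂ} (hw : w.re < 0) :
    Tendsto (fun ρ : ℂ => ρ ^ w) atInfUHP (𝓝 0) :=
  (tendsto_cpow_cobounded hw).mono_left inf_le_left

theorem cpow_half_add_eq_mul {ρ : ℂ} (hρ : ρ ≠ 0) (ν : ℂ) :
    ρ ^ ((1 : ℂ) / 2 + ν) = ρ ^ ((1 : ℂ) / 2 - ν) * ρ ^ (2 * ν) := by
  rw [← Complex.cpow_add _ _ hρ]
  ring_nf

namespace GraphProblem

variable {p : ℕ} (G : GraphProblem p)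

def psiDen (k : Fin p) (ρ : ℂ) : ℂ := G.b1 k ρ * G.Delta ρ

def psiNum (k : Fin p) (x : ℝ) (ρ : ℂ) : ℂ :=
  2 * Complex.I * ρ * (G.Deltak k ρ * G.f k x ρ + G.Delta ρ * G.S2 k x (ρ ^ 2))

def StokesHolomorphic : Prop :=
  ∀ j, DifferentiableOn ℂ (G.b1 j) {ρ : ℂ | 0 < ρ.im} ∧
    DifferentiableOn ℂ (G.b2 j) {ρ : ℂ | 0 < ρ.im}

def StokesContinuous : Prop :=
  ∀ j, ContinuousOn (G.b1 j) {ρ : ℂ | 0 ≤ ρ.im ∧ ρ ≠ 0} ∧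
    ContinuousOn (G.b2 j) {ρ : ℂ | 0 ≤ ρ.im ∧ ρ ≠ 0}

theorem Delta_div_prod (c : Fin p → ℂ) (ρ : ℂ) :
    G.Delta ρ / ∏ j, c j = ∑ s, (G.σ1 s * G.b1 s ρ + G.σ2 s * G.b2 s ρ) / c s *
      ∏ j ∈ Finset.univ.erase s, G.σ j * (G.b1 j ρ / c j) := by
  rw [Delta, Finset.sum_div]
  refine Finset.sum_congr rfl fun s _ => ?_
  simp_rw [← mul_div_assoc]
  rw [Finset.prod_div_distrib, div_mul_div_comm, Finset.mul_prod_erase _ c (Finset.mem_univ s)]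

theorem tendsto_Delta_div_nhdsZeroUHP :
    Tendsto (fun ρ => G.Delta ρ / ∏ j, ρ ^ ((1 : ℂ) / 2 - G.ν j)) nhdsZeroUHP (𝓝 G.d0) := by
  simp_rw [Delta_div_prod, d0]
  refine tendsto_finsetSum _ fun s _ => ?_
  simp_rw [add_div, mul_div_assoc]
  exact (((G.hb10 s).const_mul _).add ((G.hb20 s).const_mul _)).mul
    (tendsto_finsetProd _ fun j _ => (G.hb10 j).const_mul _)

theorem tendsto_b1_div_atInfUHP (j : Fin p) :
    Tendsto (fun ρ => G.b1 j ρ / ρ ^ ((1 : ℂ) / 2 - G.ν j)) atInfUHP (𝓝 (G.b1inf j)) :=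
  tendsto_div_of_isBigO_sub inf_le_left
    (eventually_ne_zero_atInfUHP.mono fun _ hρ => by simp [hρ])
    (G.hb1inf j)

theorem tendsto_b2_div_atInfUHP (j : Fin p) :
    Tendsto (fun ρ => G.b2 j ρ / ρ ^ ((1 : ℂ) / 2 + G.ν j)) atInfUHP (𝓝 (G.b2inf j)) :=
  tendsto_div_of_isBigO_sub inf_le_left
    (eventually_ne_zero_atInfUHP.mono fun _ hρ => by simp [hρ])
    (G.hb2inf j)

theorem tendsto_Delta_lead_atInfUHP (s : Fin p) :
    Tendsto (fun ρ => (G.σ1 s * G.b1 s ρ + G.σ2 s * G.b2 s ρ) / ρ ^ ((1 : ℂ) / 2 + G.ν s))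
      atInfUHP (𝓝 (G.σ2 s * G.b2inf s)) := by
  have hdecay : Tendsto (fun ρ : ℂ => ρ ^ (-(2 * G.ν s))) atInfUHP (𝓝 0) :=
    tendsto_cpow_atInfUHP (by simp; linarith [G.hν s])
  have hlim := (((G.tendsto_b1_div_atInfUHP s).const_mul (G.σ1 s)).mul hdecay).add
    ((G.tendsto_b2_div_atInfUHP s).const_mul (G.σ2 s))
  rw [mul_zero, zero_add] at hlim
  refine hlim.congr' ?_
  filter_upwards [eventually_ne_zero_atInfUHP] with ρ hρ
  have h1 : ρ ^ ((1 : ℂ) / 2 - G.ν s) ≠ 0 := by simp [hρ]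
  have h2 : ρ ^ (2 * G.ν s) ≠ 0 := by simp [hρ]
  rw [cpow_half_add_eq_mul hρ, Complex.cpow_neg]
  field_simp

/- The `s`-th summand of `Δ` is of order `ρ^{2ν_s} ∏_j ρ^{1/2-ν_j}`; only the rays with maximal
`Re ν_s` survive this normalization, and by Condition ν they share `ν_s = ν_{s₀}`. -/
theorem tendsto_Delta_div_atInfUHP {s₀ : Fin p} (hs₀ : ∀ l, (G.ν l).re ≤ (G.ν s₀).re) :
    Tendsto (fun ρ => G.Delta ρ / (∏ j, ρ ^ ((1 : ℂ) / 2 - G.ν j)) / ρ ^ (2 * G.ν s₀))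
      atInfUHP (𝓝 G.aInf1) := by
  simp_rw [Delta_div_prod, Finset.sum_div, aInf1]
  refine tendsto_finsetSum _ fun s _ => ?_
  have hprod := tendsto_finsetProd (Finset.univ.erase s) fun j _ =>
    (G.tendsto_b1_div_atInfUHP j).const_mul (G.σ j)
  have heq : (fun ρ => (G.σ1 s * G.b1 s ρ + G.σ2 s * G.b2 s ρ) / ρ ^ ((1 : ℂ) / 2 + G.ν s) *
      ρ ^ (2 * G.ν s - 2 * G.ν s₀) * ∏ j ∈ Finset.univ.erase s, G.σ j *
        (G.b1 j ρ / ρ ^ ((1 : ℂ) / 2 - G.ν j))) =ᶠ[atInfUHP]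
      fun ρ => (G.σ1 s * G.b1 s ρ + G.σ2 s * G.b2 s ρ) / ρ ^ ((1 : ℂ) / 2 - G.ν s) *
        (∏ j ∈ Finset.univ.erase s, G.σ j * (G.b1 j ρ / ρ ^ ((1 : ℂ) / 2 - G.ν j))) /
          ρ ^ (2 * G.ν s₀) := by
    filter_upwards [eventually_ne_zero_atInfUHP] with ρ hρ
    have h1 : ρ ^ ((1 : ℂ) / 2 - G.ν s) ≠ 0 := by simp [hρ]
    have h2 : ρ ^ (2 * G.ν s) ≠ 0 := by simp [hρ]
    have h3 : ρ ^ (2 * G.ν s₀) ≠ 0 := by simp [hρ]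
    rw [cpow_half_add_eq_mul hρ, Complex.cpow_sub (2 * G.ν s) _ hρ]
    field_simp
  by_cases hs : ∀ l, (G.ν l).re ≤ (G.ν s).re
  · have hν : G.ν s = G.ν s₀ := by
      by_contra hne
      exact G.hνcond s s₀ hne (le_antisymm (hs₀ s) (hs s₀))
    have hratio : Tendsto (fun ρ : ℂ => ρ ^ (2 * G.ν s - 2 * G.ν s₀)) atInfUHP (𝓝 1) := by
      simp [hν, tendsto_const_nhds]
    have hlim := ((G.tendsto_Delta_lead_atInfUHP s).mul hratio).mul hprod
    rw [mul_one] at hlim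
    rw [if_pos hs]
    exact hlim.congr' heq
  · obtain ⟨l, hl⟩ := not_forall.1 hs
    have hratio : Tendsto (fun ρ : ℂ => ρ ^ (2 * G.ν s - 2 * G.ν s₀)) atInfUHP (𝓝 0) :=
      tendsto_cpow_atInfUHP (by simp; linarith [hs₀ l])
    have hlim := ((G.tendsto_Delta_lead_atInfUHP s).mul hratio).mul hprod
    rw [mul_zero, zero_mul] at hlim
    rw [if_neg hs]
    exact hlim.congr' heq

theorem eventually_psiDen_ne_zero_atInfUHP (hRinf : G.CondRinf) (k : Fin p) :
    ∀ᶠ ρ in atInfUHP, G.psiDen k ρ ≠ 0 := by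
  have : Nonempty (Fin p) := ⟨k⟩
  obtain ⟨s₀, hs₀⟩ := Finite.exists_max fun s => (G.ν s).re
  have hΔ : ∀ᶠ ρ in atInfUHP, G.Delta ρ / (∏ j, ρ ^ ((1 : ℂ) / 2 - G.ν j)) ≠ 0 :=
    eventually_ne_zero_of_tendsto_div (G.tendsto_Delta_div_atInfUHP hs₀) hRinf
  filter_upwards [eventually_ne_zero_of_tendsto_div (G.tendsto_b1_div_atInfUHP k) (G.hb1inf0 k),
    hΔ] with ρ hb1 hΔρ
  exact mul_ne_zero hb1 (left_ne_zero_of_mul (by simpa [div_eq_mul_inv] using hΔρ))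

theorem eventually_psiDen_ne_zero_nhdsZeroUHP (hR0 : G.CondR0) (k : Fin p) :
    ∀ᶠ ρ in nhdsZeroUHP, G.psiDen k ρ ≠ 0 :=
  (eventually_ne_zero_of_tendsto_div (G.hb10 k) (hR0.1 k)).and
    (eventually_ne_zero_of_tendsto_div G.tendsto_Delta_div_nhdsZeroUHP hR0.2) |>.mono
    fun _ h => mul_ne_zero h.1 h.2

theorem isBounded_psiDen_zeros (hRinf : G.CondRinf) (k : Fin p) :
    IsBounded {ρ : ℂ | 0 ≤ ρ.im ∧ ρ ≠ 0 ∧ G.psiDen k ρ = 0} := by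
  have h := G.eventually_psiDen_ne_zero_atInfUHP hRinf k
  rw [atInfUHP, eventually_inf_principal] at h
  exact isBounded_def.2 (mem_of_superset h fun ρ hρ hZ => hρ hZ.1 hZ.2.2)

section Regularity

variable {G}

theorem differentiableOn_Delta (hb : G.StokesHolomorphic) :
    DifferentiableOn ℂ G.Delta {ρ : ℂ | 0 < ρ.im} :=
  DifferentiableOn.fun_sum fun s _ =>
    (((hb s).1.const_mul _).add ((hb s).2.const_mul _)).mul
      (DifferentiableOn.fun_finsetProd fun j _ => (hb j).1.const_mul _)

theorem differentiableOn_psiDen (hb : G.StokesHolomorphic) (k : Fin p) :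
    DifferentiableOn ℂ (G.psiDen k) {ρ : ℂ | 0 < ρ.im} :=
  (hb k).1.mul (differentiableOn_Delta hb)

theorem differentiableOn_psiNum (hb : G.StokesHolomorphic) {k : Fin p} {x : ℝ} (hx : 0 < x)
    (hS : Differentiable ℂ fun lam => G.S2 k x lam) :
    DifferentiableOn ℂ (G.psiNum k x) {ρ : ℂ | 0 < ρ.im} :=
  (differentiableOn_id.const_mul _).mul
    ((((DifferentiableOn.fun_finsetProd fun j _ => (hb j).1.const_mul _).const_mul _).mul
      (G.hfan k x hx)).add
      ((differentiableOn_Delta hb).mul (hS.comp (differentiable_pow 2)).differentiableOn))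

theorem eventually_psiDen_ne_zero_nhdsNE (hG : G.CondG) (hb : G.StokesHolomorphic) (k : Fin p)
    {ρ₀ : ℂ} (hρ₀ : 0 < ρ₀.im) : ∀ᶠ ρ in 𝓝[≠] ρ₀, G.psiDen k ρ ≠ 0 := by
  have hd : DifferentiableAt ℂ (G.psiDen k) ρ₀ := (differentiableOn_psiDen hb k).differentiableAt
    (UpperHalfPlane.isOpen_upperHalfPlaneSet.mem_nhds hρ₀)
  by_cases h0 : G.psiDen k ρ₀ = 0
  · exact hd.hasDerivAt.eventually_ne ((hG k).2 ρ₀ hρ₀ h0)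
  · exact eventually_nhdsWithin_of_eventually_nhds (hd.continuousAt.eventually_ne h0)

theorem continuousOn_psiDen (hb : G.StokesContinuous) (k : Fin p) :
    ContinuousOn (G.psiDen k) {ρ : ℂ | 0 ≤ ρ.im ∧ ρ ≠ 0} :=
  (hb k).1.mul <| continuousOn_finsetSum _ fun s _ =>
    ((continuousOn_const.mul (hb s).1).add (continuousOn_const.mul (hb s).2)).mul
      (continuousOn_finsetProd _ fun j _ => continuousOn_const.mul (hb j).1)

end Regularity

theorem finite_psiDen_zeros (hG : G.CondG) (hR0 : G.CondR0) (hRinf : G.CondRinf)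
    (hb : G.StokesHolomorphic) (hc : G.StokesContinuous) (k : Fin p) :
    {ρ : ℂ | 0 ≤ ρ.im ∧ ρ ≠ 0 ∧ G.psiDen k ρ = 0}.Finite := by
  have hS : ∀ z, (∀ᶠ ρ in 𝓝[{ρ : ℂ | 0 ≤ ρ.im ∧ ρ ≠ 0}] z, G.psiDen k ρ ≠ 0) →
      ∀ᶠ ρ in 𝓝[≠] z, ρ ∉ {ρ : ℂ | 0 ≤ ρ.im ∧ ρ ≠ 0 ∧ G.psiDen k ρ = 0} := fun z hz => by
    filter_upwards [eventually_nhdsWithin_of_eventually_nhds (eventually_nhdsWithin_iff.1 hz)]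
      with ρ hρ hZ
    exact hρ ⟨hZ.1, hZ.2.1⟩ hZ.2.2
  refine .of_isBounded_of_eventually_notMem (G.isBounded_psiDen_zeros hRinf k) fun z => ?_
  rcases lt_trichotomy z.im 0 with hz | hz | hz
  · filter_upwards [eventually_nhdsWithin_of_eventually_nhds
      (Complex.continuous_im.continuousAt.eventually_lt continuousAt_const hz)] with ρ hρ hZ
    exact hρ.not_ge hZ.1
  · obtain ⟨r, rfl⟩ : ∃ r : ℝ, z = r := ⟨z.re, Complex.ext rfl (by simpa using hz)⟩
    rcases eq_or_ne r 0 with rfl | hr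
    · rw [Complex.ofReal_zero]
      exact hS 0 (G.eventually_psiDen_ne_zero_nhdsZeroUHP hR0 k)
    · exact hS r ((continuousOn_psiDen hc k r ⟨by simp, by simpa using hr⟩).tendsto.eventually_ne
        ((hG k).1 r hr))
  · exact (eventually_psiDen_ne_zero_nhdsNE hG hb k hz).mono fun ρ h hZ => h hZ.2.2

theorem b2_ne_zero_of_b1_eq_zero {j : Fin p} {ρ : ℂ} (hρ : ρ ≠ 0) (him : 0 ≤ ρ.im)
    (h : G.b1 j ρ = 0) : G.b2 j ρ ≠ 0 := by
  intro h2
  have hf0 : (fun x : ℝ => G.f j x ρ * Complex.exp (-(Complex.I * ρ * x))) =ᶠ[atTop]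
      fun _ => 0 := by
    filter_upwards [eventually_gt_atTop 0] with x hx
    rw [G.hb j ρ hρ him x hx, h, h2]
    ring
  exact one_ne_zero (tendsto_nhds_unique ((G.hf j ρ hρ him).2.1.congr' hf0) tendsto_const_nhds)

theorem psiNum_eq_mul_f {k : Fin p} {x : ℝ} {ρ : ℂ} (hρ : ρ ≠ 0) (him : 0 ≤ ρ.im)
    (h0 : G.psiDen k ρ = 0) (hx : 0 < x) :
    G.psiNum k x ρ = 2 * Complex.I * ρ * (G.Deltak k ρ + G.Delta ρ / G.b2 k ρ) * G.f k x ρ := by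
  rcases mul_eq_zero.1 h0 with hb1 | hΔ
  · have hb2 := G.b2_ne_zero_of_b1_eq_zero hρ him hb1
    rw [psiNum, G.hb k ρ hρ him x hx, hb1]
    field_simp
    ring
  · rw [psiNum, hΔ]
    ring

end GraphProblem

namespace WeylData

open GraphProblem

variable {p : ℕ} {G : GraphProblem p} (W : WeylData G) {k : Fin p}

theorem psi_eq_psiNum_div {x : ℝ} {ρ : ℂ} (h : G.psiDen k ρ ≠ 0) :
    W.ψ k k x ρ = G.psiNum k x ρ / G.psiDen k ρ := by
  have hb1 : G.b1 k ρ ≠ 0 := left_ne_zero_of_mul h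
  have hΔ : G.Delta ρ ≠ 0 := right_ne_zero_of_mul h
  rw [W.hψk, W.hγkk]
  unfold psiNum psiDen
  field_simp

theorem psi_eventuallyEq_div (hG : G.CondG) (hb : G.StokesHolomorphic) (x : ℝ) {ρ₀ : ℂ}
    (hρ₀ : 0 < ρ₀.im) : ∀ᶠ ρ in 𝓝[≠] ρ₀, W.ψ k k x ρ = G.psiNum k x ρ / G.psiDen k ρ :=
  (eventually_psiDen_ne_zero_nhdsNE hG hb k hρ₀).mono fun _ h => W.psi_eq_psiNum_div h

theorem exists_psi_eq_div_sub (hG : G.CondG) (hb : G.StokesHolomorphic) {x : ℝ} (hx : 0 < x)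
    (hS : Differentiable ℂ fun lam => G.S2 k x lam) {ρ₀ : ℂ} (hρ₀ : 0 < ρ₀.im)
    (h0 : G.psiDen k ρ₀ = 0) :
    ∃ g : ℂ → ℂ, AnalyticAt ℂ g ρ₀ ∧ g ρ₀ = G.psiNum k x ρ₀ / deriv (G.psiDen k) ρ₀ ∧
      ∀ᶠ ρ in 𝓝[≠] ρ₀, W.ψ k k x ρ = g ρ / (ρ - ρ₀) :=
  have hU := UpperHalfPlane.isOpen_upperHalfPlaneSet.mem_nhds hρ₀
  exists_analyticAt_eq_div_sub ((differentiableOn_psiNum hb hx hS).analyticAt hU)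
    ((differentiableOn_psiDen hb k).analyticAt hU) h0 ((hG k).2 ρ₀ hρ₀ h0)
    (W.psi_eventuallyEq_div hG hb x hρ₀)

theorem psiDen_eq_zero_of_mem_ZplusSet (hG : G.CondG) (hb : G.StokesHolomorphic)
    (hS : ∀ x : ℝ, 0 < x → Differentiable ℂ fun lam => G.S2 k x lam) {ρ₀ : ℂ}
    (h : ρ₀ ∈ ZplusSet W k) : G.psiDen k ρ₀ = 0 := by
  obtain ⟨hρ₀, x, hx, hne⟩ := h
  by_contra h0
  have hU := UpperHalfPlane.isOpen_upperHalfPlaneSet.mem_nhds hρ₀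
  exact hne ⟨_, ((differentiableOn_psiNum hb hx (hS x hx)).analyticAt hU).div
    ((differentiableOn_psiDen hb k).analyticAt hU) h0,
    (W.psi_eventuallyEq_div hG hb x hρ₀).mono fun _ h => h.symm⟩

end WeylData

/-- under Conditions G, R₀ and R∞, for each `k` the function `b_{k1}(ρ)Δ(ρ)`
has at most a finite set of zeros in the closed upper half-plane, all simple; at each such
zero `ψ_{kk}(x,·)` has either a simple pole or a removable singularity; and for every pole
`ρ₀ ∈ Z_k^+` there is a constant `α_k(ρ₀)`, independent of `x`, such that
`res_{ρ=ρ₀} ψ_{kk}(x,ρ) = α_k(ρ₀) f_k(x,ρ₀) = α_k(ρ₀) e^{iρ₀x}(1 + o(1))` as `x → ∞`. -/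
theorem stmt8 (p : ℕ) (G : GraphProblem p) (W : WeylData G) (k : Fin p)
    (hG : G.CondG) (hR0 : G.CondR0) (hRinf : G.CondRinf)
    -- analyticity of the Stokes multipliers in the open upper half-plane and
    -- continuity up to the real axis
    (hban : ∀ j, DifferentiableOn ℂ (G.b1 j) {ρ : ℂ | 0 < ρ.im} ∧
      DifferentiableOn ℂ (G.b2 j) {ρ : ℂ | 0 < ρ.im})
    (hbcont : ∀ j, ContinuousOn (G.b1 j) {ρ : ℂ | 0 ≤ ρ.im ∧ ρ ≠ 0} ∧
      ContinuousOn (G.b2 j) {ρ : ℂ | 0 ≤ ρ.im ∧ ρ ≠ 0})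
    -- `S_{k2}(x,·)` is entire
    (hSan : ∀ x : ℝ, 0 < x → Differentiable ℂ (fun lam : ℂ => G.S2 k x lam)) :
    Set.Finite {ρ : ℂ | 0 ≤ ρ.im ∧ ρ ≠ 0 ∧ G.b1 k ρ * G.Delta ρ = 0} ∧
    (∀ ρ₀ : ℂ, 0 < ρ₀.im → G.b1 k ρ₀ * G.Delta ρ₀ = 0 →
      deriv (fun z => G.b1 k z * G.Delta z) ρ₀ ≠ 0 ∧
      (∀ x : ℝ, 0 < x → ∃ g : ℂ → ℂ, AnalyticAt ℂ g ρ₀ ∧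
        ∀ᶠ ρ in 𝓝[≠] ρ₀, W.ψ k k x ρ = g ρ / (ρ - ρ₀))) ∧
    (∀ ρ₀ ∈ ZplusSet W k, ∃ α : ℂ,
      (∀ x : ℝ, 0 < x →
        Tendsto (fun ρ => (ρ - ρ₀) * W.ψ k k x ρ) (𝓝[≠] ρ₀)
          (𝓝 (α * G.f k x ρ₀))) ∧
      Tendsto (fun x : ℝ => α * G.f k x ρ₀ * Complex.exp (-(Complex.I * ρ₀ * x)))
        atTop (𝓝 α)) := by
  refine ⟨G.finite_psiDen_zeros hG hR0 hRinf hban hbcont k,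
    fun ρ₀ hρ₀ h0 => ⟨(hG k).2 ρ₀ hρ₀ h0, fun x hx => ?_⟩, fun ρ₀ hZ => ?_⟩
  · obtain ⟨g, hg, -, hψ⟩ := W.exists_psi_eq_div_sub hG hban hx (hSan x hx) hρ₀ h0
    exact ⟨g, hg, hψ⟩
  have hρ₀ : 0 < ρ₀.im := hZ.1
  have hne : ρ₀ ≠ 0 := fun h => by simp [h] at hρ₀
  have h0 := W.psiDen_eq_zero_of_mem_ZplusSet hG hban hSan hZ
  refine ⟨2 * Complex.I * ρ₀ * (G.Deltak k ρ₀ + G.Delta ρ₀ / G.b2 k ρ₀) /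
    deriv (G.psiDen k) ρ₀, fun x hx => ?_, ?_⟩
  · obtain ⟨g, hg, hgρ₀, hψ⟩ := W.exists_psi_eq_div_sub hG hban hx (hSan x hx) hρ₀ h0
    rw [div_mul_eq_mul_div, ← G.psiNum_eq_mul_f hne hρ₀.le h0 hx, ← hgρ₀]
    exact tendsto_sub_mul_of_eq_div_sub hg.continuousAt hψ
  · simpa [mul_assoc] using (G.hf k ρ₀ hne hρ₀.le).2.1.const_mul _
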